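/- Let E be a real inner-product space, c, m ∈ E, α ∈ ℝ, and J(x) = ½‖x - c‖² - α⟨x - c, N_m(c)⟩, restricted to the feasible set A(c,m) = {x : ⟨x,m⟩ = ⟨c,m⟩}. If x ∈ A(c,m) satisfies J(x) ≤ J(y) for all y ∈ A(c,m), then x = T_α(c,m): the ONT transport is also the unique minimizer of J over the feasible affine set. -/

import Mathlib

noncomputable section
open scoped RealInnerProductSpace

variable {E : Type*}

def ontProj [NormedAddCommGroup E] [InnerProductSpace ℝ E] (c m : E) : E :=
  if ‖m‖ = 0 then 0 else ((⟪c, m⟫) / ‖m‖ ^ 2) • m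

def ontNovelty [NormedAddCommGroup E] [InnerProductSpace ℝ E] (c m : E) : E :=
  c - ontProj c m

def ontTransport [NormedAddCommGroup E] [InnerProductSpace ℝ E] (α : ℝ) (c m : E) : E :=
  c + α • ontNovelty c m

def ontTarget [NormedAddCommGroup E] [InnerProductSpace ℝ E] (α : ℝ) (c : E) : E :=
  (1 + α) • c

def ontJ [NormedAddCommGroup E] [InnerProductSpace ℝ E] (α : ℝ) (c m x : E) : ℝ :=
  (1 / 2 : ℝ) * ‖x - c‖ ^ 2 - α * ⟪x - c, ontNovelty c m⟫

variable [NormedAddCommGroup E] [InnerProductSpace ℝ E]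

theorem stmt13 (α : ℝ) (c m : E) (x : E)
    (hfeas : ⟪x, m⟫ = ⟪c, m⟫)
    (hmin : ∀ y : E, ⟪y, m⟫ = ⟪c, m⟫ → ontJ α c m x ≤ ontJ α c m y) :
    x = ontTransport α c m := by
  have hNm : ⟪ontNovelty c m, m⟫ = 0 := by
    unfold ontNovelty ontProj
    by_cases hm : ‖m‖ = 0
    · have hm0 : m = 0 := norm_eq_zero.mp hm
      simp [hm0]
    · simp only [hm, if_false, inner_sub_left, inner_smul_left]
      have h2 : ‖m‖ ^ 2 ≠ 0 := pow_ne_zero 2 hm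
      rw [real_inner_self_eq_norm_sq]
      simp only [conj_trivial]
      field_simp
      ring
  have hTfeas : ⟪ontTransport α c m, m⟫ = ⟪c, m⟫ := by
    simp [ontTransport, inner_add_left, inner_smul_left, hNm]
  have key : ∀ y : E, ontJ α c m y =
      (1/2) * ‖y - ontTransport α c m‖ ^ 2 - (1/2) * α^2 * ‖ontNovelty c m‖^2 := by
    intro y
    have hdecomp : y - c = (y - ontTransport α c m) + α • ontNovelty c m := by
      simp only [ontTransport]; abel
    rw [ontJ, hdecomp, norm_add_sq_real, inner_add_left,
      real_inner_smul_left, real_inner_smul_right,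
      real_inner_self_eq_norm_sq, norm_smul]
    simp only [mul_pow, Real.norm_eq_abs, sq_abs]
    ring
  have hx := hmin (ontTransport α c m) hTfeas
  rw [key x, key (ontTransport α c m)] at hx
  simp only [sub_self, norm_zero] at hx
  have h1 : ‖x - ontTransport α c m‖ ^ 2 ≤ 0 := by nlinarith
  have h2 := sq_nonneg ‖x - ontTransport α c m‖
  have hz : ‖x - ontTransport α c m‖ = 0 := by nlinarith
  exact sub_eq_zero.mp (norm_eq_zero.mp hz)
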